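/- arXiv:1708.06651 — 4 statements merged into one kernel-verified Lean document; each statement's English description precedes it below -/
import Mathlib

section
/- Let X be a Hausdorff topological space, Z a Hausdorff topological vector space, C ⊆ Z a convex pointed cone with nonempty interior, K a nonempty subset of X, and f, g : K × K → Z. Assume there exists x₀ ∈ K such that for every fixed y ∈ K with y ≠ x₀, there exist nets (y_α) ⊆ K with lim y_α = y and (w_α) ⊆ Z \ (−int C) such that w_α − f(x₀, y_α) − g(x₀, y) ∈ −C for all α, and such that the map z ↦ f(x₀, z) is almost upper semicontinuous at y. Then f(x₀, y) + g(x₀, y) ∉ −int C for all y ∈ K with y ≠ x₀. -/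
open Filter Topology Set Pointwise

universe u

/-- A directed nonempty index type, serving as the index of a net. -/
structure DirIx : Type (u + 1) where
  carrier : Type u
  [pre : Preorder carrier]
  [dir : IsDirected carrier (· ≤ ·)]
  [ne : Nonempty carrier]

attribute [instance] DirIx.pre DirIx.dir DirIx.ne

/-- `h` is almost upper semicontinuous (a-usc) at `x₀` relative to the set `K`:
for every net `x` in `K` converging to `x₀` there is a net `z` in `Z` converging
to some `zl` with `h (x α) - z α ∈ -C` for all `α` and `h x₀ - zl ∈ C`. -/
def AUscAt {X Z : Type*} [TopologicalSpace X] [TopologicalSpace Z] [AddCommGroup Z]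
    (C : Set Z) (K : Set X) (h : X → Z) (x₀ : X) : Prop :=
  ∀ (D : DirIx.{u}) (x : D.carrier → X), (∀ α, x α ∈ K) →
    Tendsto x atTop (𝓝 x₀) →
    ∃ (z : D.carrier → Z) (zl : Z), Tendsto z atTop (𝓝 zl) ∧
      (∀ α, h (x α) - z α ∈ -C) ∧ h x₀ - zl ∈ C


/-! If `f x₀ y + g x₀ y` lay in the open set `-int C`, the a-usc majorants `z α` of
`f x₀ (yn α)` would converge to a point `zl` with `zl + g x₀ y ∈ -int C`, so eventually
`f x₀ (yn α) + g x₀ y ∈ -C + -int C ⊆ -int C`; then `w α ∈ -C + -int C ⊆ -int C`, a contradiction.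
Everything rests on `int C + C ⊆ int C`, which holds as soon as `C + C ⊆ C`. -/

section NegInteriorCone

variable {Z : Type*} [AddCommGroup Z] [TopologicalSpace Z] [IsTopologicalAddGroup Z]
  {C : Set Z}

theorem add_mem_neg_interior_of_add_subset (hC : C + C ⊆ C) {a b : Z} (ha : a ∈ -C)
    (hb : b ∈ -interior C) : a + b ∈ -interior C := by
  rw [Set.mem_neg] at ha hb ⊢
  rw [neg_add_rev]
  exact interior_mono hC (subset_interior_add_left (add_mem_add hb ha))

theorem AUscAt.eventually_add_mem_neg_interior {X : Type*} [TopologicalSpace X] {K : Set X}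
    {h : X → Z} {y : X} (hh : AUscAt.{u} C K h y) (hC : C + C ⊆ C) {D : DirIx.{u}}
    {yn : D.carrier → X} (hynK : ∀ α, yn α ∈ K) (hyn : Tendsto yn atTop (𝓝 y)) {v : Z}
    (hv : h y + v ∈ -interior C) : ∀ᶠ α in atTop, h (yn α) + v ∈ -interior C := by
  obtain ⟨z, zl, hz, hhz, hzl⟩ := hh D yn hynK hyn
  have hlim : zl + v ∈ -interior C := by
    convert add_mem_neg_interior_of_add_subset hC (Set.neg_mem_neg.2 hzl) hv using 1
    abel
  filter_upwards [(hz.add_const v).eventually (isOpen_interior.neg.mem_nhds hlim)] with α hα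
  convert add_mem_neg_interior_of_add_subset hC (hhz α) hα using 1
  abel

end NegInteriorCone

theorem stmt8_general {X Z : Type*} [TopologicalSpace X]
    [AddCommGroup Z] [TopologicalSpace Z] [IsTopologicalAddGroup Z]
    (C : Set Z)
    (hconvex : C + C = C)
    (K : Set X) (f g : X → X → Z)
    (x₀ : X)
    (hA : ∀ y ∈ K, y ≠ x₀ →
      (∃ (D : DirIx.{u}) (yn : D.carrier → X) (w : D.carrier → Z),
        (∀ α, yn α ∈ K) ∧ Tendsto yn atTop (𝓝 y) ∧
        (∀ α, w α ∉ -interior C) ∧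
        (∀ α, w α - f x₀ (yn α) - g x₀ y ∈ -C)) ∧
      AUscAt.{u} C K (fun z => f x₀ z) y) :
    ∀ y ∈ K, y ≠ x₀ → f x₀ y + g x₀ y ∉ -interior C := by
  intro y hy hyx₀ hfg
  obtain ⟨⟨D, yn, w, hynK, hyn, hw, hwf⟩, husc⟩ := hA y hy hyx₀
  obtain ⟨α, hα⟩ :=
    (husc.eventually_add_mem_neg_interior hconvex.subset hynK hyn hfg).exists
  apply hw α
  convert add_mem_neg_interior_of_add_subset hconvex.subset (hwf α) hα using 1
  abel

theorem stmt8 {X Z : Type*} [TopologicalSpace X] [T2Space X]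
    [AddCommGroup Z] [Module ℝ Z] [TopologicalSpace Z] [IsTopologicalAddGroup Z]
    [ContinuousSMul ℝ Z] [T2Space Z]
    (C : Set Z) (hcone : ∀ c ∈ C, ∀ t : ℝ, 0 ≤ t → t • c ∈ C)
    (hconvex : C + C = C) (hpointed : C ∩ (-C) = {0})
    (hint : (interior C).Nonempty)
    (K : Set X) (hKne : K.Nonempty) (f g : X → X → Z)
    (x₀ : X) (hx₀ : x₀ ∈ K)
    (hA : ∀ y ∈ K, y ≠ x₀ →
      (∃ (D : DirIx.{u}) (yn : D.carrier → X) (w : D.carrier → Z),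
        (∀ α, yn α ∈ K) ∧ Tendsto yn atTop (𝓝 y) ∧
        (∀ α, w α ∉ -interior C) ∧
        (∀ α, w α - f x₀ (yn α) - g x₀ y ∈ -C)) ∧
      AUscAt.{u} C K (fun z => f x₀ z) y) :
    ∀ y ∈ K, y ≠ x₀ → f x₀ y + g x₀ y ∉ -interior C :=
  stmt8_general C hconvex K f g x₀ hA
end

section
/- Let X be a Hausdorff topological space, Z a Hausdorff topological vector space, C ⊆ Z a convex pointed cone with nonempty interior, K a nonempty subset of X, and f, g : K × K → Z. Assume there exists x₀ ∈ K such that for every fixed y ∈ K with y ≠ x₀, there exist nets (x_α), (y_α) ⊆ K with lim x_α = x₀, lim y_α = y and (w_α) ⊆ Z \ (−int C) such that w_α − f(x_α, y) − g(x₀, y_α) ∈ −C for all α, and such that the map x ↦ f(x, y) is almost upper semicontinuous at x₀ and the map z ↦ g(x₀, z) is almost upper semicontinuous at y. Then f(x₀, y) + g(x₀, y) ∉ −int C for all y ∈ K with y ≠ x₀. -/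
open Filter Topology Set Pointwise

universe u

/-!
Write `a ≤ b` for `b - a ∈ C`. Since `C + C ⊆ C`, this relation is transitive and
`interior C + C ⊆ interior C`, so `-interior C` is an open lower set. The a-usc nets `z`, `z'`
give `w α ≤ f (x α) y + g x₀ (yn α) ≤ z α + z' α` and `zl + zl' ≤ f x₀ y + g x₀ y`. If the latter
lay in `-interior C`, then so would `zl + zl'`, hence eventually `z α + z' α`, hence some `w α`.
-/

section ConeOrder

variable {Z : Type*} [AddCommGroup Z] {C : Set Z}

theorem add_mem_neg_of_add_subset (hC : C + C ⊆ C) {a b : Z} (ha : a ∈ -C) (hb : b ∈ -C) :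
    a + b ∈ -C := by
  rw [Set.mem_neg, neg_add]
  exact hC (add_mem_add ha hb)

variable [TopologicalSpace Z] [IsTopologicalAddGroup Z]

theorem mem_neg_interior_of_sub_mem (hC : C + C ⊆ C) {a b : Z} (hb : b ∈ -interior C)
    (hab : b - a ∈ C) : a ∈ -interior C := by
  have h : -b + (b - a) ∈ interior C :=
    interior_mono hC (subset_interior_add_left (add_mem_add hb hab))
  rwa [sub_eq_add_neg, neg_add_cancel_left, ← Set.mem_neg] at h

theorem notMem_neg_interior_of_tendsto {ι : Type*} {l : Filter ι} [l.NeBot] (hC : C + C ⊆ C)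
    {w s : ι → Z} {a : Z} (hs : Tendsto s l (𝓝 a)) (hws : ∀ i, w i - s i ∈ -C)
    (hw : ∀ i, w i ∉ -interior C) : a ∉ -interior C := fun ha ↦ by
  obtain ⟨i, hi⟩ := (hs.eventually (isOpen_interior.neg.mem_nhds ha)).exists
  refine hw i (mem_neg_interior_of_sub_mem hC hi ?_)
  simpa using hws i

end ConeOrder

theorem stmt11_general {X Z : Type*} [TopologicalSpace X]
    [AddCommGroup Z] [TopologicalSpace Z] [IsTopologicalAddGroup Z]
    (C : Set Z)
    (hconvex : C + C = C)
    (K : Set X) (f g : X → X → Z)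
    (x₀ : X)
    (hA : ∀ y ∈ K, y ≠ x₀ →
      (∃ (D : DirIx.{u}) (x yn : D.carrier → X) (w : D.carrier → Z),
        (∀ α, x α ∈ K) ∧ (∀ α, yn α ∈ K) ∧
        Tendsto x atTop (𝓝 x₀) ∧ Tendsto yn atTop (𝓝 y) ∧
        (∀ α, w α ∉ -interior C) ∧
        (∀ α, w α - f (x α) y - g x₀ (yn α) ∈ -C)) ∧
      AUscAt.{u} C K (fun x => f x y) x₀ ∧ AUscAt.{u} C K (fun z => g x₀ z) y) :
    ∀ y ∈ K, y ≠ x₀ → f x₀ y + g x₀ y ∉ -interior C := by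
  intro y hy hyx₀ hsum
  obtain ⟨⟨D, x, yn, w, hxK, hynK, hx, hyn, hw, hwfg⟩, hf, hg⟩ := hA y hy hyx₀
  obtain ⟨z, zl, hz, hfz, hfzl⟩ := hf D x hxK hx
  obtain ⟨z', zl', hz', hgz, hgzl⟩ := hg D yn hynK hyn
  have hC : C + C ⊆ C := hconvex.subset
  refine notMem_neg_interior_of_tendsto hC (hz.add hz') (fun α ↦ ?_) hw
    (mem_neg_interior_of_sub_mem hC hsum ?_)
  · convert add_mem_neg_of_add_subset hC (add_mem_neg_of_add_subset hC (hwfg α) (hfz α))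
      (hgz α) using 1
    abel
  · convert hC (add_mem_add hfzl hgzl) using 1
    abel

theorem stmt11 {X Z : Type*} [TopologicalSpace X] [T2Space X]
    [AddCommGroup Z] [Module ℝ Z] [TopologicalSpace Z] [IsTopologicalAddGroup Z]
    [ContinuousSMul ℝ Z] [T2Space Z]
    (C : Set Z) (hcone : ∀ c ∈ C, ∀ t : ℝ, 0 ≤ t → t • c ∈ C)
    (hconvex : C + C = C) (hpointed : C ∩ (-C) = {0})
    (hint : (interior C).Nonempty)
    (K : Set X) (hKne : K.Nonempty) (f g : X → X → Z)
    (x₀ : X) (hx₀ : x₀ ∈ K)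
    (hA : ∀ y ∈ K, y ≠ x₀ →
      (∃ (D : DirIx.{u}) (x yn : D.carrier → X) (w : D.carrier → Z),
        (∀ α, x α ∈ K) ∧ (∀ α, yn α ∈ K) ∧
        Tendsto x atTop (𝓝 x₀) ∧ Tendsto yn atTop (𝓝 y) ∧
        (∀ α, w α ∉ -interior C) ∧
        (∀ α, w α - f (x α) y - g x₀ (yn α) ∈ -C)) ∧
      AUscAt.{u} C K (fun x => f x y) x₀ ∧ AUscAt.{u} C K (fun z => g x₀ z) y) :
    ∀ y ∈ K, y ≠ x₀ → f x₀ y + g x₀ y ∉ -interior C :=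
  stmt11_general C hconvex K f g x₀ hA
end

section
/- Let X be a Hausdorff topological space, Z a Hausdorff topological vector space, C ⊆ Z a convex pointed cone with nonempty interior, K a nonempty subset of X, and f, g : K × K → Z. Let x₀ ∈ K be such that g(x₀, y) ∉ −int C for all y ∈ K and f(x₀, x₀) ∈ C. Assume that for every fixed y ∈ K with y ≠ x₀, the map x ↦ f(x, y) is almost upper semicontinuous at x₀, the map z ↦ g(x₀, z) is almost upper semicontinuous at y, and there exist nets (x_α), (y_α), (z_α) ⊆ K with lim x_α = x₀ and lim y_α = y such that g(x₀, z_α) − f(x_α, y) − g(x₀, y_α) ∈ −C for all α. Then f(x₀, y) + g(x₀, y) ∉ −int C for all y ∈ K. -/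
open Filter Topology Set Pointwise

universe u

/-! Write `a ≤ b` for `b - a ∈ C`. Since `C + C ⊆ C` and `int C + C` is open,
`-int C + -C ⊆ -int C`: anything below a point of `-int C` lies in `-int C`.
For `y = x₀`, `g x₀ x₀ ≤ f x₀ x₀ + g x₀ x₀` gives the contradiction at once. For `y ≠ x₀`,
the a-usc limits `wl ≤ f x₀ y` and `vl ≤ g x₀ y` give `wl + vl ∈ -int C`, an open set, so
`w α + v α ∈ -int C` for some `α`; along the given nets
`g x₀ (z α) ≤ f (x α) y + g x₀ (yn α) ≤ w α + v α`, so `g x₀ (z α) ∈ -int C`, contradicting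
the choice of `x₀`. -/

section ConeOrder

variable {Z : Type*} [AddCommGroup Z] [TopologicalSpace Z] [IsTopologicalAddGroup Z]
  {C : Set Z}

theorem interior_add_subset_interior (hC : C + C ⊆ C) : interior C + C ⊆ interior C :=
  interior_maximal ((add_subset_add_right interior_subset).trans hC)
    isOpen_interior.add_right

theorem add_mem_neg_interior (hC : C + C ⊆ C) {a b : Z} (ha : a ∈ -interior C)
    (hb : b ∈ -C) : a + b ∈ -interior C := by
  rw [Set.mem_neg, neg_add]
  exact interior_add_subset_interior hC (add_mem_add ha hb)

end ConeOrder

theorem stmt14_general {X Z : Type*} [TopologicalSpace X]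
    [AddCommGroup Z] [TopologicalSpace Z] [IsTopologicalAddGroup Z]
    (C : Set Z)
    (hconvex : C + C = C)
    (K : Set X) (f g : X → X → Z)
    (x₀ : X)
    (hg0 : ∀ y ∈ K, g x₀ y ∉ -interior C) (hf0 : f x₀ x₀ ∈ C)
    (hB : ∀ y ∈ K, y ≠ x₀ →
      (AUscAt.{u} C K (fun x => f x y) x₀ ∧ AUscAt.{u} C K (fun z => g x₀ z) y) ∧
      (∃ (D : DirIx.{u}) (x yn z : D.carrier → X),
        (∀ α, x α ∈ K) ∧ (∀ α, yn α ∈ K) ∧ (∀ α, z α ∈ K) ∧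
        Tendsto x atTop (𝓝 x₀) ∧ Tendsto yn atTop (𝓝 y) ∧
        (∀ α, g x₀ (z α) - f (x α) y - g x₀ (yn α) ∈ -C))) :
    ∀ y ∈ K, f x₀ y + g x₀ y ∉ -interior C := by
  have hC : C + C ⊆ C := hconvex.subset
  intro y hy hfg
  rcases eq_or_ne y x₀ with rfl | hyx
  · refine hg0 y hy ?_
    simpa using add_mem_neg_interior hC hfg (neg_mem_neg.mpr hf0)
  obtain ⟨⟨hf, hg⟩, D, x, yn, z, hxK, hynK, hzK, hx, hyn, hnet⟩ := hB y hy hyx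
  obtain ⟨w, wl, hw, hfw, hwl⟩ := hf D x hxK hx
  obtain ⟨v, vl, hv, hgv, hvl⟩ := hg D yn hynK hyn
  have hlim : wl + vl ∈ -interior C := by
    have := add_mem_neg_interior hC (add_mem_neg_interior hC hfg (neg_mem_neg.mpr hwl))
      (neg_mem_neg.mpr hvl)
    convert this using 1; abel
  obtain ⟨α, hα⟩ := ((hw.add hv).eventually (isOpen_interior.neg.mem_nhds hlim)).exists
  refine hg0 (z α) (hzK α) ?_
  have := add_mem_neg_interior hC (add_mem_neg_interior hC
    (add_mem_neg_interior hC hα (hnet α)) (hfw α)) (hgv α)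
  convert this using 1; abel

theorem stmt14 {X Z : Type*} [TopologicalSpace X] [T2Space X]
    [AddCommGroup Z] [Module ℝ Z] [TopologicalSpace Z] [IsTopologicalAddGroup Z]
    [ContinuousSMul ℝ Z] [T2Space Z]
    (C : Set Z) (hcone : ∀ c ∈ C, ∀ t : ℝ, 0 ≤ t → t • c ∈ C)
    (hconvex : C + C = C) (hpointed : C ∩ (-C) = {0})
    (hint : (interior C).Nonempty)
    (K : Set X) (hKne : K.Nonempty) (f g : X → X → Z)
    (x₀ : X) (hx₀ : x₀ ∈ K)
    (hg0 : ∀ y ∈ K, g x₀ y ∉ -interior C) (hf0 : f x₀ x₀ ∈ C)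
    (hB : ∀ y ∈ K, y ≠ x₀ →
      (AUscAt.{u} C K (fun x => f x y) x₀ ∧ AUscAt.{u} C K (fun z => g x₀ z) y) ∧
      (∃ (D : DirIx.{u}) (x yn z : D.carrier → X),
        (∀ α, x α ∈ K) ∧ (∀ α, yn α ∈ K) ∧ (∀ α, z α ∈ K) ∧
        Tendsto x atTop (𝓝 x₀) ∧ Tendsto yn atTop (𝓝 y) ∧
        (∀ α, g x₀ (z α) - f (x α) y - g x₀ (yn α) ∈ -C))) :
    ∀ y ∈ K, f x₀ y + g x₀ y ∉ -interior C :=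
  stmt14_general C hconvex K f g x₀ hg0 hf0 hB
end

section
/- Let X be a Hausdorff topological space, Z a Hausdorff topological vector space, C ⊆ Z a convex pointed cone with nonempty interior, K a nonempty subset of X, and f, g : K × K → Z. Let x₀ ∈ K be such that g(x₀, y) ∉ −int C for all y ∈ K and f(x₀, x₀) ∈ C. Assume that for every fixed y ∈ K with y ≠ x₀, the map x ↦ g(x, y) is almost upper semicontinuous at x₀, the map z ↦ f(x₀, z) is almost upper semicontinuous at y, and there exist nets (x_α), (y_α), (z_α) ⊆ K with lim x_α = x₀ and lim y_α = y such that g(x₀, z_α) − f(x₀, y_α) − g(x_α, y) ∈ −C for all α. Then f(x₀, y) + g(x₀, y) ∉ −int C for all y ∈ K. -/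
open Filter Topology Set Pointwise

universe u

/-!
Write `≼` for the order of the cone `C`. If `f(x₀, y) + g(x₀, y) ≺ 0` strictly (i.e. lies in `-int C`),
then for `y = x₀` we get `g(x₀, x₀) ≺ -f(x₀, x₀) ≼ 0`. For `y ≠ x₀`, the two a-usc hypotheses give
nets `v → v̄`, `w → w̄` with `f(x₀, y_α) ≼ v_α`, `g(x_α, y) ≼ w_α`, `v̄ ≼ f(x₀, y)` and `w̄ ≼ g(x₀, y)`,
so `v̄ + w̄ ≺ 0`, hence `v_α + w_α ≺ 0` eventually since `int C` is open. The hypothesis on the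
nets then yields `g(x₀, z_α) ≼ f(x₀, y_α) + g(x_α, y) ≼ v_α + w_α ≺ 0`, contradicting
`g(x₀, z_α) ∉ -int C`.
-/

theorem add_mem_interior_of_add_subset {G : Type*} [AddGroup G] [TopologicalSpace G]
    [ContinuousConstVAdd Gᵃᵒᵖ G] {S : Set G} (hS : S + S ⊆ S) {a b : G}
    (ha : a ∈ interior S) (hb : b ∈ S) : a + b ∈ interior S :=
  interior_mono hS (subset_interior_add_left (add_mem_add ha hb))

theorem add_notMem_neg_interior_of_aUscAt {X Z : Type*} [TopologicalSpace X]
    [AddCommGroup Z] [TopologicalSpace Z] [IsTopologicalAddGroup Z]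
    {C : Set Z} (hC : C + C ⊆ C) {K : Set X} {f g : X → X → Z} {x₀ y : X}
    (hg0 : ∀ y ∈ K, g x₀ y ∉ -interior C)
    (hg : AUscAt.{u} C K (fun x => g x y) x₀) (hf : AUscAt.{u} C K (f x₀) y)
    (D : DirIx.{u}) (x yn z : D.carrier → X) (hxK : ∀ α, x α ∈ K) (hynK : ∀ α, yn α ∈ K)
    (hzK : ∀ α, z α ∈ K) (hx : Tendsto x atTop (𝓝 x₀)) (hyn : Tendsto yn atTop (𝓝 y))
    (hnet : ∀ α, g x₀ (z α) - f x₀ (yn α) - g (x α) y ∈ -C) :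
    f x₀ y + g x₀ y ∉ -interior C := by
  intro hsum
  rw [Set.mem_neg] at hsum
  obtain ⟨w, w', hw, hw_le, hw'_le⟩ := hg D x hxK hx
  obtain ⟨v, v', hv, hv_le, hv'_le⟩ := hf D yn hynK hyn
  have hlim : -(v' + w') ∈ interior C := by
    have := add_mem_interior_of_add_subset hC hsum (hC (add_mem_add hv'_le hw'_le))
    convert this using 1
    abel
  obtain ⟨α, hα⟩ : ∃ α, -(v α + w α) ∈ interior C :=
    ((hv.add hw).neg.eventually (isOpen_interior.eventually_mem hlim)).exists
  have hslack : -(g x₀ (z α) - f x₀ (yn α) - g (x α) y) +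
      (-(f x₀ (yn α) - v α) + -(g (x α) y - w α)) ∈ C :=
    hC (add_mem_add (hnet α) (hC (add_mem_add (hv_le α) (hw_le α))))
  refine hg0 (z α) (hzK α) (Set.mem_neg.mpr ?_)
  convert add_mem_interior_of_add_subset hC hα hslack using 1
  abel

theorem stmt15_general {X Z : Type*} [TopologicalSpace X]
    [AddCommGroup Z] [TopologicalSpace Z] [IsTopologicalAddGroup Z]
    (C : Set Z)
    (hconvex : C + C = C)
    (K : Set X) (f g : X → X → Z)
    (x₀ : X)
    (hg0 : ∀ y ∈ K, g x₀ y ∉ -interior C) (hf0 : f x₀ x₀ ∈ C)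
    (hB : ∀ y ∈ K, y ≠ x₀ →
      (AUscAt.{u} C K (fun x => g x y) x₀ ∧ AUscAt.{u} C K (fun z => f x₀ z) y) ∧
      (∃ (D : DirIx.{u}) (x yn z : D.carrier → X),
        (∀ α, x α ∈ K) ∧ (∀ α, yn α ∈ K) ∧ (∀ α, z α ∈ K) ∧
        Tendsto x atTop (𝓝 x₀) ∧ Tendsto yn atTop (𝓝 y) ∧
        (∀ α, g x₀ (z α) - f x₀ (yn α) - g (x α) y ∈ -C))) :
    ∀ y ∈ K, f x₀ y + g x₀ y ∉ -interior C := by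
  intro y hy
  by_cases hyx : y = x₀
  · subst hyx
    intro hsum
    refine hg0 y hy (Set.mem_neg.mpr ?_)
    convert add_mem_interior_of_add_subset hconvex.subset (Set.mem_neg.mp hsum) hf0 using 1
    abel
  · obtain ⟨⟨hg, hf⟩, D, x, yn, z, hxK, hynK, hzK, hx, hyn, hnet⟩ := hB y hy hyx
    exact add_notMem_neg_interior_of_aUscAt hconvex.subset hg0 hg hf D x yn z hxK hynK hzK
      hx hyn hnet

theorem stmt15 {X Z : Type*} [TopologicalSpace X] [T2Space X]
    [AddCommGroup Z] [Module ℝ Z] [TopologicalSpace Z] [IsTopologicalAddGroup Z]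
    [ContinuousSMul ℝ Z] [T2Space Z]
    (C : Set Z) (hcone : ∀ c ∈ C, ∀ t : ℝ, 0 ≤ t → t • c ∈ C)
    (hconvex : C + C = C) (hpointed : C ∩ (-C) = {0})
    (hint : (interior C).Nonempty)
    (K : Set X) (hKne : K.Nonempty) (f g : X → X → Z)
    (x₀ : X) (hx₀ : x₀ ∈ K)
    (hg0 : ∀ y ∈ K, g x₀ y ∉ -interior C) (hf0 : f x₀ x₀ ∈ C)
    (hB : ∀ y ∈ K, y ≠ x₀ →
      (AUscAt.{u} C K (fun x => g x y) x₀ ∧ AUscAt.{u} C K (fun z => f x₀ z) y) ∧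
      (∃ (D : DirIx.{u}) (x yn z : D.carrier → X),
        (∀ α, x α ∈ K) ∧ (∀ α, yn α ∈ K) ∧ (∀ α, z α ∈ K) ∧
        Tendsto x atTop (𝓝 x₀) ∧ Tendsto yn atTop (𝓝 y) ∧
        (∀ α, g x₀ (z α) - f x₀ (yn α) - g (x α) y ∈ -C))) :
    ∀ y ∈ K, f x₀ y + g x₀ y ∉ -interior C :=
  stmt15_general C hconvex K f g x₀ hg0 hf0 hB
end
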